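/- For the uniform-random explanation on input x of length L with L ≥ 1, under a uniformly random ranking (uniform random permutation π) the expected comp-suff difference satisfies E[Δ(x,e)] = E[κ] − E[σ] = (1/(L+1)) Σ_{l=0}^{L} (E_π[f(x̂^(l)_π)] − E_π[f(x̃^(l)_π)]), where for each l, E_π[f(x̃^(l)_π)] = E_π[f(x̂^(L−l)_π)]; hence the expected comprehensiveness equals the expected sufficiency and E[Δ] = 0. -/
import Mathlib


/-- The full input, as a list. -/
def fullInput {α : Type*} {L : ℕ} (x : Fin L → α) : List α :=
  (List.finRange L).map x

/-- For a ranking `π` (feature `i` has 0-based importance position `π i`, larger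
means more important), the input with the top-`l` features removed. -/
def remTopP {α : Type*} {L : ℕ} (x : Fin L → α) (π : Equiv.Perm (Fin L))
    (l : ℕ) : List α :=
  ((List.finRange L).filter (fun i => (π i : ℕ) < L - l)).map x

/-- The input restricted to the top-`l` features (original order preserved). -/
def keepTopP {α : Type*} {L : ℕ} (x : Fin L → α) (π : Equiv.Perm (Fin L))
    (l : ℕ) : List α :=
  ((List.finRange L).filter (fun i => L - l ≤ (π i : ℕ))).map x

/-- Comprehensiveness of the ranking `π`. -/
noncomputable def comprP {α : Type*} {L : ℕ} (f : List α → ℝ) (x : Fin L → α)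
    (π : Equiv.Perm (Fin L)) : ℝ :=
  (1 / (L + 1)) * ∑ l ∈ Finset.range (L + 1), (f (fullInput x) - f (remTopP x π l))

/-- Sufficiency of the ranking `π`. -/
noncomputable def suffP {α : Type*} {L : ℕ} (f : List α → ℝ) (x : Fin L → α)
    (π : Equiv.Perm (Fin L)) : ℝ :=
  (1 / (L + 1)) * ∑ l ∈ Finset.range (L + 1), (f (fullInput x) - f (keepTopP x π l))

lemma rem_eq_keep {α : Type*} {L : ℕ} (x : Fin L → α) (π : Equiv.Perm (Fin L))
    {l : ℕ} (hl : l ≤ L) :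
    remTopP x π l = keepTopP x (Fin.revPerm * π) (L - l) := by
  unfold remTopP keepTopP
  congr 1
  apply List.filter_congr
  intro i _
  have h1 : (π i : ℕ) < L := (π i).isLt
  simp only [Equiv.Perm.mul_apply, Fin.revPerm_apply, Fin.val_rev, decide_eq_decide]
  omega

lemma sum_rem_eq_sum_keep {α : Type*} {L : ℕ} (f : List α → ℝ) (x : Fin L → α)
    {l : ℕ} (hl : l ≤ L) :
    ∑ π : Equiv.Perm (Fin L), f (remTopP x π l) =
      ∑ π : Equiv.Perm (Fin L), f (keepTopP x π (L - l)) := by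
  calc ∑ π : Equiv.Perm (Fin L), f (remTopP x π l)
      = ∑ π : Equiv.Perm (Fin L), f (keepTopP x (Fin.revPerm * π) (L - l)) :=
        Finset.sum_congr rfl fun π _ => by rw [rem_eq_keep x π hl]
    _ = _ := Fintype.sum_equiv (Equiv.mulLeft Fin.revPerm)
        (fun π => f (keepTopP x (Fin.revPerm * π) (L - l)))
        (fun σ => f (keepTopP x σ (L - l))) (fun π => rfl)

/-- For a uniformly random ranking `π` of an input of length `L ≥ 1`:
for every `l`, the deletion `x̃⁽ˡ⁾_π` and the insertion `x̂⁽ᴸ⁻ˡ⁾_π` are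
equidistributed, hence the expected comprehensiveness equals the expected
sufficiency and the expected comp-suff difference `E[Δ]` is 0. -/
theorem stmt11 {α : Type*} {L : ℕ} (hL : 1 ≤ L) (f : List α → ℝ) (x : Fin L → α) :
    (∀ l ≤ L, ∑ π : Equiv.Perm (Fin L), f (remTopP x π l) =
      ∑ π : Equiv.Perm (Fin L), f (keepTopP x π (L - l))) ∧
    (∑ π : Equiv.Perm (Fin L), comprP f x π) / (Nat.factorial L) =
      (∑ π : Equiv.Perm (Fin L), suffP f x π) / (Nat.factorial L) ∧
    (∑ π : Equiv.Perm (Fin L), (comprP f x π - suffP f x π)) / (Nat.factorial L) = 0 := by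
  have key : ∀ l ≤ L, ∑ π : Equiv.Perm (Fin L), f (remTopP x π l) =
      ∑ π : Equiv.Perm (Fin L), f (keepTopP x π (L - l)) :=
    fun l hl => sum_rem_eq_sum_keep f x hl
  have hsum : (∑ π : Equiv.Perm (Fin L), comprP f x π) =
      ∑ π : Equiv.Perm (Fin L), suffP f x π := by
    unfold comprP suffP
    simp only [← Finset.mul_sum, Finset.sum_sub_distrib]
    congr 1
    congr 1
    rw [Finset.sum_comm]
    nth_rewrite 2 [Finset.sum_comm]
    rw [← Finset.sum_range_reflect (fun l => ∑ π : Equiv.Perm (Fin L), f (keepTopP x π l))]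
    apply Finset.sum_congr rfl
    intro l hl
    simp only [Finset.mem_range] at hl
    have hl' : l ≤ L := by omega
    have := key l hl'
    simpa [Nat.sub_sub_self hl'] using key l hl'
  exact ⟨key, by rw [hsum], by rw [Finset.sum_sub_distrib, hsum]; simp⟩
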